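/- arXiv:2605.17295 — 2 statements merged into one kernel-verified Lean document; each statement's English description precedes it below -/
import Mathlib

section
/- Let O be a finite set, π̃ a strictly positive probability mass function on O, η ∈ ℝ, and let π_θ be a smooth strictly positive family of probability mass functions on O parameterized by θ ∈ ℝ^d (e.g. softmax). Define the on-policy loss J(θ) = ∑_o π_θ(o) · (η + log π_θ(o) − log π̃(o))². If θ* satisfies π_{θ*} = π̃, then ∇_θ J(θ*) = 0. -/
open Finset

/-- Stationarity of the tilted target under a prompt-only bias `η`: if
`π_{θ*} = π̃`, the on-policy squared-residual loss
`J(θ) = ∑ o, π_θ(o) (η + log π_θ(o) - log π̃(o))²` has vanishing derivative at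
`θ*`. -/
theorem biased_anchor_stationarity
    {O : Type*} [Fintype O]
    (πt : O → ℝ) (hπt_pos : ∀ o, 0 < πt o) (hπt_sum : ∑ o, πt o = 1)
    (η : ℝ) (d : ℕ)
    (π : (Fin d → ℝ) → O → ℝ)
    (hπ_smooth : ∀ o, ContDiff ℝ (⊤ : ℕ∞) (fun θ => π θ o))
    (hπ_pos : ∀ θ o, 0 < π θ o)
    (hπ_sum : ∀ θ, ∑ o, π θ o = 1)
    (J : (Fin d → ℝ) → ℝ)
    (hJ : ∀ θ, J θ = ∑ o, π θ o *
        (η + Real.log (π θ o) - Real.log (πt o)) ^ 2)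
    (θstar : Fin d → ℝ) (hθstar : ∀ o, π θstar o = πt o) :
    fderiv ℝ J θstar = 0 := by
  set D : O → ((Fin d → ℝ) →L[ℝ] ℝ) := fun o => fderiv ℝ (fun θ => π θ o) θstar with hD
  have hderiv : ∀ o, HasFDerivAt (fun θ => π θ o) (D o) θstar := fun o =>
    ((hπ_smooth o).differentiable (by simp)).differentiableAt.hasFDerivAt
  -- derivative of each summand at θstar
  have hterm : ∀ o : O, HasFDerivAt
      (fun θ => π θ o * (η + Real.log (π θ o) - Real.log (πt o)) ^ 2)
      ((η ^ 2 + 2 * η) • D o) θstar := by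
    intro o
    have hne : π θstar o ≠ 0 := (hπ_pos θstar o).ne'
    have hlog : HasFDerivAt (fun θ => Real.log (π θ o))
        ((π θstar o)⁻¹ • D o) θstar := by
      simpa [Function.comp_def] using (Real.hasDerivAt_log hne).comp_hasFDerivAt θstar (hderiv o)
    have hres : HasFDerivAt (fun θ => η + Real.log (π θ o) - Real.log (πt o))
        ((π θstar o)⁻¹ • D o) θstar := by
      simpa using ((hlog.const_add η).sub_const (Real.log (πt o)))
    have hsq : HasFDerivAt (fun θ => (η + Real.log (π θ o) - Real.log (πt o)) ^ 2)
        ((η + Real.log (π θstar o) - Real.log (πt o)) • ((π θstar o)⁻¹ • D o) +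
         (η + Real.log (π θstar o) - Real.log (πt o)) • ((π θstar o)⁻¹ • D o)) θstar := by
      simpa [pow_two] using hres.fun_mul hres
    have hmul := (hderiv o).fun_mul hsq
    have hr : η + Real.log (π θstar o) - Real.log (πt o) = η := by
      rw [hθstar o]; ring
    rw [hr] at hmul
    refine hmul.congr_fderiv ?_
    simp only [smul_smul, smul_add]
    have h1 : π θstar o * (η * (π θstar o)⁻¹) = η := by
      field_simp
    rw [h1]
    module
  have hsum : HasFDerivAt J ((η ^ 2 + 2 * η) • ∑ o, D o) θstar := by
    have h := HasFDerivAt.fun_sum (fun o (_ : o ∈ Finset.univ) => hterm o)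
    have he : J = fun θ => ∑ o, π θ o * (η + Real.log (π θ o) - Real.log (πt o)) ^ 2 :=
      funext hJ
    rw [he]
    simpa [Finset.smul_sum] using h
  have hsumπ : HasFDerivAt (fun θ => ∑ o, π θ o) (∑ o, D o) θstar :=
    HasFDerivAt.fun_sum (fun o (_ : o ∈ Finset.univ) => hderiv o)
  have hconst : (fun θ : Fin d → ℝ => ∑ o, π θ o) = fun _ => (1 : ℝ) :=
    funext fun θ => hπ_sum θ
  have hzero : (∑ o, D o) = 0 := by
    have h0 : HasFDerivAt (fun θ : Fin d → ℝ => ∑ o, π θ o) (0 : (Fin d → ℝ) →L[ℝ] ℝ) θstar := by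
      rw [hconst]; exact hasFDerivAt_const (𝕜 := ℝ) (1 : ℝ) θstar
    exact hsumπ.unique h0
  rw [hzero, smul_zero] at hsum
  exact hsum.fderiv
end

section
/- Consider the two-element output space O = {0,1} with π̃(0) = 2/3, π̃(1) = 1/3, and bias η = −2. For p ∈ (0,1) define L(p) = p·(η + log(p/(2/3)))² + (1−p)·(η + log((1−p)/(1/3)))². Then L(2/3) = 4 and L(0.9) < 4; in particular, the target distribution π̃ (i.e. p = 2/3) is not a global minimizer of L. -/
open Finset

/-- Counterexample: with `π̃ = (2/3, 1/3)` and bias `η = -2`, the on-policy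
biased squared-residual loss satisfies `L(2/3) = 4` and `L(0.9) < 4`, so the
target `p = 2/3` is not a global minimizer of `L` on `(0,1)`. -/
theorem biased_anchor_counterexample
    (η : ℝ) (hη : η = -2)
    (L : ℝ → ℝ)
    (hL : ∀ p, L p = p * (η + Real.log (p / (2 / 3))) ^ 2
        + (1 - p) * (η + Real.log ((1 - p) / (1 / 3))) ^ 2) :
    L (2 / 3) = 4 ∧ L (9 / 10) < 4 ∧
      ¬ (∀ p ∈ Set.Ioo (0 : ℝ) 1, L (2 / 3) ≤ L p) := by
  subst hη
  have h1 : L (2 / 3) = 4 := by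
    rw [hL]
    norm_num
  -- bounds on x = log(27/20)
  set x := Real.log (27 / 20) with hx
  set y := Real.log (10 / 3) with hy
  have hx1 : (1 : ℝ) / 4 < x := by
    rw [hx, Real.lt_log_iff_exp_lt (by norm_num)]
    have h := Real.add_one_le_exp (-(1 / 4) : ℝ)
    have hpos : (0 : ℝ) < Real.exp (-(1 / 4)) := Real.exp_pos _
    have : Real.exp (1 / 4 : ℝ) = (Real.exp (-(1 / 4)))⁻¹ := by
      rw [← Real.exp_neg]; norm_num
    rw [this]
    have h34 : (3 : ℝ) / 4 ≤ Real.exp (-(1 / 4)) := by linarith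
    have : (Real.exp (-(1 / 4) : ℝ))⁻¹ ≤ 4 / 3 := by
      rw [inv_le_comm₀ hpos (by norm_num)] at *
      linarith
    linarith
  have hx2 : x < 2 := by
    have := Real.log_lt_sub_one_of_pos (x := (27 : ℝ) / 20) (by norm_num) (by norm_num)
    rw [← hx] at this; linarith
  have hy1 : 0 < y := Real.log_pos (by norm_num)
  have hy2 : y < 5 / 4 := by
    rw [hy, Real.log_lt_iff_lt_exp (by norm_num)]
    have h1e : (2.7182818283 : ℝ) < Real.exp 1 := Real.exp_one_gt_d9
    have h2 : (1 : ℝ) + 1 / 4 ≤ Real.exp (1 / 4) := by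
      have := Real.add_one_le_exp ((1 : ℝ) / 4); linarith
    have : Real.exp ((5 : ℝ) / 4) = Real.exp 1 * Real.exp (1 / 4) := by
      rw [← Real.exp_add]; norm_num
    rw [this]
    nlinarith [Real.exp_pos (1 : ℝ), Real.exp_pos ((1 : ℝ) / 4)]
  have h2 : L (9 / 10) < 4 := by
    rw [hL]
    have e1 : (9 : ℝ) / 10 / (2 / 3) = 27 / 20 := by norm_num
    have e2 : ((1 : ℝ) - 9 / 10) / (1 / 3) = 3 / 10 := by norm_num
    have e3 : Real.log ((3 : ℝ) / 10) = -y := by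
      rw [hy, ← Real.log_inv]; norm_num
    rw [e1, e2, e3, ← hx]
    nlinarith [sq_nonneg (x - 1 / 4), sq_nonneg (y - 5 / 4)]
  refine ⟨h1, h2, fun h => ?_⟩
  have := h (9 / 10) (by norm_num)
  linarith
end
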